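/- Let 0 < ε < 1, set c = (ε / (3·binom(m,s)))^{1/s}, α = 1 − 1/s, and p = c·Q^{−α}, and assume 0 < p < 1. Then E[X] ≤ ε/3 + 3^m · Q^{−2/s}. -/

import Mathlib

open scoped Classical
noncomputable section

variable {F : Type} [Field F]

/-- Projective points of `F^k`. -/
abbrev Pt (F : Type) [Field F] (k : ℕ) := Projectivization F (Fin k → F)

/-- Linear span of a set of projective points. -/
def pspan {k : ℕ} (T : Set (Pt F k)) : Submodule F (Fin k → F) :=
  ⨆ x ∈ T, x.submodule

/-- A finite set of projective points is dependent if the dimension of its linear span is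
at most its cardinality minus one. -/
def Dep {k : ℕ} (T : Finset (Pt F k)) : Prop :=
  Module.finrank F (pspan (T : Set (Pt F k))) + 1 ≤ T.card

/-- A circuit is a dependent set that is minimal with respect to inclusion. -/
def IsCircuit {k : ℕ} (T : Finset (Pt F k)) : Prop :=
  Dep T ∧ ∀ T' ⊂ T, ¬ Dep T'

/-- A crossing circuit (for the line configuration `L`): a circuit contained in the union
of the lines which contains at most one point on each line. -/
def CrossingCircuit {k m : ℕ} (L : Fin m → Submodule F (Fin k → F))
    (T : Finset (Pt F k)) : Prop :=
  IsCircuit T ∧ (∀ x ∈ T, ∃ i, x.submodule ≤ L i) ∧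
    ∀ i, (T.filter fun x => x.submodule ≤ L i).card ≤ 1

/-- Weight of the subset `Γ` of `ΩF` under the product Bernoulli(`p`) measure on the
subsets of `ΩF`. -/
def bwt (p : ℝ) {k : ℕ} (ΩF Γ : Finset (Pt F k)) : ℝ :=
  p ^ Γ.card * (1 - p) ^ (ΩF.card - Γ.card)

/-- Expectation of the random variable `Y` under the product Bernoulli(`p`) measure `μ_p`
on the subsets of `ΩF`. -/
def expec (p : ℝ) {k : ℕ} (ΩF : Finset (Pt F k)) (Y : Finset (Pt F k) → ℝ) : ℝ :=
  ∑ Γ ∈ ΩF.powerset, bwt p ΩF Γ * Y Γ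

/-- Probability of the event `E` under the product Bernoulli(`p`) measure `μ_p` on the
subsets of `ΩF`. -/
def prob (p : ℝ) {k : ℕ} (ΩF : Finset (Pt F k)) (E : Finset (Pt F k) → Prop) : ℝ :=
  ∑ Γ ∈ ΩF.powerset.filter E, bwt p ΩF Γ

/-- `V_i(Γ)`: the number of points of `Γ` on the line `L`. -/
def Vline {k : ℕ} (L : Submodule F (Fin k → F)) (Γ : Finset (Pt F k)) : ℕ :=
  (Γ.filter fun x => x.submodule ≤ L).card

/-- `X_u(Γ)`: the number of pairs `(D, J)` with `D ⊆ Ω` a crossing circuit of size `u` and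
`J ⊆ D ∩ Γ` of size `2u - k`. -/
def Xu {k m : ℕ} (L : Fin m → Submodule F (Fin k → F)) (u : ℕ)
    (Γ : Finset (Pt F k)) : ℕ :=
  Set.ncard {DJ : Finset (Pt F k) × Finset (Pt F k) |
    CrossingCircuit L DJ.1 ∧ DJ.1.card = u ∧
    DJ.2 ⊆ DJ.1 ∩ Γ ∧ DJ.2.card = 2 * u - k}

/-- `X = ∑_{u = ⌈(k+1)/2⌉}^{m} X_u`. -/
def Xtot {k m : ℕ} (L : Fin m → Submodule F (Fin k → F)) (Γ : Finset (Pt F k)) : ℕ :=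
  ∑ u ∈ Finset.Icc ((k + 2) / 2) m, Xu L u Γ

/-!
Since a fixed `J ⊆ Ω` lies in `Γ` with probability `p ^ |J|`, `E[X_u]` equals the number of
crossing circuits of size `u` times `C(u, 2u - k) p ^ (2u - k)`. Let `D` be a crossing circuit
meeting the set `S` of lines, `|S| = u`. Writing its points as `a_i P_i + b_i Q_i`, a dependence
with nonzero coefficients `g_i` (which exists by minimality) gives the nonzero vector
`(g_i a_i, g_i b_i)` in the kernel of `F^(S ⊕ S) → F^k`, `w ↦ ∑ w_i P_i + w'_i Q_i`; the kernel
has dimension `2u - k` by general position, and `D` is recovered from the projective class of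
that vector. Hence there are at most `C(m, u) · |ℙ(F^(2u-k))| ≤ C(m, u) Q ^ (2u - k - 1)` such
circuits. With `p = c Q^(-α)` the term `u = m` is exactly `ε / 3`, and each term `u < m` is at
most `C(m, u) 2^u Q^(-2/s)`; these sum to at most `3^m Q^(-2/s)`.
-/

open Function
open scoped LinearAlgebra.Projectivization

section Bernoulli

variable {k : ℕ}

lemma expec_sum (p : ℝ) (ΩF : Finset (Pt F k)) {A : Type} (s : Finset A)
    (f : A → Finset (Pt F k) → ℝ) :
    expec p ΩF (fun Γ => ∑ z ∈ s, f z Γ) = ∑ z ∈ s, expec p ΩF (f z) := by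
  simp only [expec, Finset.mul_sum]
  exact Finset.sum_comm

lemma expec_indicator_subset (p : ℝ) {ΩF J : Finset (Pt F k)} (hJ : J ⊆ ΩF) :
    expec p ΩF (fun Γ => if J ⊆ Γ then 1 else 0) = p ^ J.card := by
  -- expand `∏_{x ∈ Ω} (p + [x ∉ J] (1 - p))` in two ways
  have hprod := Finset.prod_add (fun _ => p) (fun x => if x ∈ J then 0 else 1 - p) ΩF
  have hlhs : ∏ x ∈ ΩF, (p + if x ∈ J then 0 else 1 - p) = p ^ J.card := by
    have hsummand : ∀ x, (p + if x ∈ J then 0 else 1 - p) = if x ∈ J then p else 1 := by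
      intro x; split_ifs <;> ring
    simp_rw [hsummand, Finset.prod_ite_mem]
    simp [Finset.inter_eq_right.mpr hJ]
  have hterm : ∀ Γ ∈ ΩF.powerset, ∏ x ∈ ΩF \ Γ, (if x ∈ J then 0 else 1 - p)
      = if J ⊆ Γ then (1 - p) ^ (ΩF.card - Γ.card) else 0 := by
    intro Γ hΓ
    split_ifs with hJΓ
    · rw [Finset.prod_congr rfl fun x hx => if_neg fun hxJ => (Finset.mem_sdiff.mp hx).2 (hJΓ hxJ),
        Finset.prod_const, Finset.card_sdiff_of_subset (Finset.mem_powerset.mp hΓ)]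
    · obtain ⟨x, hxJ, hxΓ⟩ := Finset.not_subset.mp hJΓ
      exact Finset.prod_eq_zero (Finset.mem_sdiff.mpr ⟨hJ hxJ, hxΓ⟩) (if_pos hxJ)
  rw [← hlhs, hprod, expec]
  refine Finset.sum_congr rfl fun Γ hΓ => ?_
  rw [hterm Γ hΓ, bwt, Finset.prod_const]
  split_ifs <;> simp

end Bernoulli

section Circuits

variable {k : ℕ}

lemma pspan_eq_span_image_rep (T : Set (Pt F k)) :
    pspan T = Submodule.span F (Projectivization.rep '' T) := by
  rw [pspan, Set.image_eq_iUnion, Submodule.span_iUnion₂]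
  simp_rw [Projectivization.submodule_eq]

lemma dep_iff_not_linearIndepOn (T : Finset (Pt F k)) :
    Dep T ↔ ¬ LinearIndepOn F Projectivization.rep (T : Set (Pt F k)) := by
  rw [Dep, LinearIndepOn, linearIndependent_iff_card_le_finrank_span, pspan_eq_span_image_rep,
    ← Set.image_eq_range, Set.finrank]
  simp only [Finset.coe_sort_coe, Fintype.card_coe]
  omega

lemma IsCircuit.exists_dependence {D : Finset (Pt F k)} (hD : IsCircuit D) :
    ∃ g : Pt F k → F, ∑ x ∈ D, g x • x.rep = 0 ∧ ∀ x ∈ D, g x ≠ 0 := by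
  obtain ⟨g, hg, x₁, hx₁, hgx₁⟩ :=
    not_linearIndepOn_finset_iff.mp ((dep_iff_not_linearIndepOn D).mp hD.1)
  refine ⟨g, hg, fun x₀ hx₀ hgx₀ => hD.2 (D.erase x₀) (Finset.erase_ssubset hx₀) ?_⟩
  -- a dependence with a vanishing coefficient is one of a proper subset
  rw [dep_iff_not_linearIndepOn, not_linearIndepOn_finset_iff]
  refine ⟨g, by rwa [Finset.sum_erase _ (by rw [hgx₀, zero_smul])], x₁, ?_, hgx₁⟩
  exact Finset.mem_erase.mpr ⟨fun h => hgx₁ (h ▸ hgx₀), hx₁⟩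

lemma IsCircuit.nonempty {D : Finset (Pt F k)} (hD : IsCircuit D) : D.Nonempty :=
  Finset.card_pos.mp (Nat.lt_of_lt_of_le (Nat.succ_pos _) hD.1)

end Circuits

section Lines

variable {k m : ℕ}

lemma submodule_le_iff_rep_mem (x : Pt F k) (W : Submodule F (Fin k → F)) :
    x.submodule ≤ W ↔ x.rep ∈ W := by
  rw [Projectivization.submodule_eq, Submodule.span_singleton_le_iff_mem]

lemma pairwise_disjoint_span_pair {P Q : Fin m → (Fin k → F)} (hk4 : 4 ≤ k)
    (hgen : ∀ T : Finset (Fin m ⊕ Fin m), T.card ≤ k →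
      LinearIndependent F (fun t : {x // x ∈ T} => Sum.elim P Q (t : Fin m ⊕ Fin m))) :
    Pairwise (Disjoint on fun i => Submodule.span F {P i, Q i}) := by
  intro i j hij
  let T : Finset (Fin m ⊕ Fin m) := {Sum.inl i, Sum.inr i} ∪ {Sum.inl j, Sum.inr j}
  have hT : LinearIndepOn F (Sum.elim P Q) (T : Set (Fin m ⊕ Fin m)) :=
    hgen T ((Finset.card_union_le _ _).trans (by grind [Finset.card_le_two]))
  have hdisj : Disjoint ({Sum.inl i, Sum.inr i} : Set (Fin m ⊕ Fin m)) {Sum.inl j, Sum.inr j} := by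
    simp [hij.symm]
  rw [Finset.coe_union, Finset.coe_pair, Finset.coe_pair] at hT
  simpa [Set.image_pair] using ((linearIndepOn_union_iff hdisj).mp hT).2.2

lemma eq_of_submodule_le_of_pairwise_disjoint {L : Fin m → Submodule F (Fin k → F)}
    (hL : Pairwise (Disjoint on L)) {x : Pt F k} {i j : Fin m}
    (hi : x.submodule ≤ L i) (hj : x.submodule ≤ L j) : i = j := by
  by_contra hij
  rw [submodule_le_iff_rep_mem] at hi hj
  exact x.rep_nonzero (Submodule.disjoint_def.mp (hL hij) _ hi hj)

def lineSet (L : Fin m → Submodule F (Fin k → F)) (D : Finset (Pt F k)) : Finset (Fin m) :=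
  Finset.univ.filter fun i => ∃ x ∈ D, x.submodule ≤ L i

lemma exists_equiv_lineSet {L : Fin m → Submodule F (Fin k → F)} (hL : Pairwise (Disjoint on L))
    {D : Finset (Pt F k)} (hcover : ∀ x ∈ D, ∃ i, x.submodule ≤ L i)
    (hcross : ∀ i, (D.filter fun x => x.submodule ≤ L i).card ≤ 1) :
    ∃ e : lineSet L D ≃ D, ∀ i, (e i : Pt F k).submodule ≤ L i := by
  have hpt : ∀ i : lineSet L D, ∃ x ∈ D, x.submodule ≤ L i :=
    fun i => (Finset.mem_filter.mp i.2).2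
  choose pt hptD hptL using hpt
  refine ⟨Equiv.ofBijective (fun i => ⟨pt i, hptD i⟩) ⟨fun i j hij => ?_, fun x => ?_⟩, hptL⟩
  · have hij : pt i = pt j := congrArg Subtype.val hij
    exact Subtype.ext (eq_of_submodule_le_of_pairwise_disjoint hL (hptL i) (hij ▸ hptL j))
  · obtain ⟨i, hi⟩ := hcover x x.2
    let i' : lineSet L D := ⟨i, Finset.mem_filter.mpr ⟨Finset.mem_univ _, x, x.2, hi⟩⟩
    refine ⟨i', Subtype.ext (Finset.card_le_one.mp (hcross i) _ ?_ _ ?_)⟩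
    · exact Finset.mem_filter.mpr ⟨hptD i', hptL i'⟩
    · exact Finset.mem_filter.mpr ⟨x.2, hi⟩

lemma card_lineSet {L : Fin m → Submodule F (Fin k → F)} (hL : Pairwise (Disjoint on L))
    {D : Finset (Pt F k)} (hD : CrossingCircuit L D) : (lineSet L D).card = D.card := by
  obtain ⟨e, -⟩ := exists_equiv_lineSet hL hD.2.1 hD.2.2
  simpa using Fintype.card_congr e

end Lines

section LinearAlgebra

variable {k m : ℕ}

lemma geom_sum_le_add_one_pow (q d : ℕ) : ∑ i ∈ Finset.range (d + 1), q ^ i ≤ (q + 1) ^ d := by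
  rw [add_pow]
  refine Finset.sum_le_sum fun i hi => ?_
  rw [one_pow, mul_one]
  exact Nat.le_mul_of_pos_right _ (Nat.choose_pos (Nat.lt_succ_iff.mp (Finset.mem_range.mp hi)))

lemma card_projectivization_le {W : Type} [AddCommGroup W] [Module F W] [Finite F] :
    Nat.card (ℙ F W) ≤ (Nat.card F + 1) ^ (Module.finrank F W - 1) := by
  rw [Projectivization.card_of_finrank F W rfl]
  cases Module.finrank F W with
  | zero => simp
  | succ d => exact geom_sum_le_add_one_pow _ _

lemma finrank_ker_linearCombination {ι V : Type} [Fintype ι] [AddCommGroup V] [Module F V]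
    [FiniteDimensional F V] (v : ι → V) (hv : Submodule.span F (Set.range v) = ⊤) :
    Module.finrank F (LinearMap.ker (Fintype.linearCombination F v)) =
      Fintype.card ι - Module.finrank F V := by
  have h := LinearMap.finrank_range_add_finrank_ker (Fintype.linearCombination F v)
  rw [Fintype.range_linearCombination, hv, finrank_top, Module.finrank_fintype_fun_eq_card] at h
  omega

def pairFamily {V : Type} (P Q : Fin m → V) (S : Finset (Fin m)) : S ⊕ S → V :=
  Sum.elim (fun i => P i) (fun i => Q i)

lemma span_range_pairFamily_eq_top {P Q : Fin m → (Fin k → F)}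
    (hgen : ∀ T : Finset (Fin m ⊕ Fin m), T.card ≤ k →
      LinearIndependent F (fun t : {x // x ∈ T} => Sum.elim P Q (t : Fin m ⊕ Fin m)))
    {S : Finset (Fin m)} (hS : k ≤ 2 * S.card) :
    Submodule.span F (Set.range (pairFamily P Q S)) = ⊤ := by
  obtain ⟨T, hTS, hTk⟩ := Finset.exists_subset_card_eq (s := S.disjSum S) (n := k)
    (by rwa [Finset.card_disjSum, ← two_mul])
  have htop := (hgen T hTk.le).span_eq_top_of_card_eq_finrank' (by simp [hTk])
  refine eq_top_iff.mpr (htop.ge.trans (Submodule.span_mono ?_))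
  rintro _ ⟨⟨i | i, hi⟩, rfl⟩
  · exact ⟨Sum.inl ⟨i, Finset.inl_mem_disjSum.mp (hTS hi)⟩, rfl⟩
  · exact ⟨Sum.inr ⟨i, Finset.inr_mem_disjSum.mp (hTS hi)⟩, rfl⟩

def coeffPoints (P Q : Fin m → (Fin k → F)) (S : Finset (Fin m)) (w : S ⊕ S → F) :
    Set (Pt F k) :=
  {x | ∃ i : S, x.submodule = Submodule.span F {w (.inl i) • P i + w (.inr i) • Q i}}

lemma coeffPoints_smul (P Q : Fin m → (Fin k → F)) (S : Finset (Fin m)) (w : S ⊕ S → F)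
    {μ : F} (hμ : μ ≠ 0) : coeffPoints P Q S (μ • w) = coeffPoints P Q S w := by
  ext x
  simp only [coeffPoints, Set.mem_ofPred_eq, Pi.smul_apply, smul_assoc, ← smul_add,
    Submodule.span_singleton_smul_eq (IsUnit.mk0 μ hμ)]

lemma exists_mem_ker_coeffPoints_eq {P Q : Fin m → (Fin k → F)} {S : Finset (Fin m)}
    {D : Finset (Pt F k)} (hD : D.Nonempty) (e : S ≃ D)
    (he : ∀ i : S, (e i : Pt F k).rep ∈ Submodule.span F {P i, Q i}) {g : Pt F k → F}
    (hg : ∑ x ∈ D, g x • x.rep = 0) (hg0 : ∀ x ∈ D, g x ≠ 0) :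
    ∃ w ∈ LinearMap.ker (Fintype.linearCombination F (pairFamily P Q S)),
      w ≠ 0 ∧ coeffPoints P Q S w = D := by
  choose a b hab using fun i => Submodule.mem_span_pair.mp (he i)
  let w : S ⊕ S → F := Sum.elim (fun i => g (e i) * a i) (fun i => g (e i) * b i)
  have hw : ∀ i, w (.inl i) • P i + w (.inr i) • Q i = g (e i) • (e i : Pt F k).rep := by
    intro i
    simp only [w, Sum.elim_inl, Sum.elim_inr, mul_smul, ← smul_add, hab]
  refine ⟨w, ?_, fun hw0 => ?_, ?_⟩
  · rw [LinearMap.mem_ker, Fintype.linearCombination_apply, Fintype.sum_sum_type,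
      ← Finset.sum_add_distrib]
    simp only [pairFamily, Sum.elim_inl, Sum.elim_inr, hw]
    rw [Equiv.sum_comp e (fun x => g x • (x : Pt F k).rep)]
    exact (Finset.sum_coe_sort D (fun x => g x • x.rep)).trans hg
  · obtain ⟨x, hx⟩ := hD
    have h0 := hw (e.symm ⟨x, hx⟩)
    simp only [hw0, Pi.zero_apply, zero_smul, add_zero, Equiv.apply_symm_apply] at h0
    exact smul_ne_zero (hg0 x hx) x.rep_nonzero h0.symm
  · ext x
    simp only [coeffPoints, Set.mem_ofPred_eq, hw, Submodule.span_singleton_smul_eq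
      (IsUnit.mk0 _ (hg0 _ (e _).2)), ← Projectivization.submodule_eq,
      Projectivization.submodule_injective.eq_iff, Finset.mem_coe]
    exact ⟨by rintro ⟨i, rfl⟩; exact (e i).2, fun hx => ⟨e.symm ⟨x, hx⟩, by simp⟩⟩

end LinearAlgebra

def crossingCircuits {k m : ℕ} (L : Fin m → Submodule F (Fin k → F)) (ΩF : Finset (Pt F k))
    (u : ℕ) : Finset (Finset (Pt F k)) :=
  (ΩF.powersetCard u).filter (CrossingCircuit L)

section Counting

variable {k m : ℕ} [Fintype F] {P Q : Fin m → (Fin k → F)} {L : Fin m → Submodule F (Fin k → F)}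

lemma card_le_of_lineSet_eq
    (hgen : ∀ T : Finset (Fin m ⊕ Fin m), T.card ≤ k →
      LinearIndependent F (fun t : {x // x ∈ T} => Sum.elim P Q (t : Fin m ⊕ Fin m)))
    (hL : ∀ i, L i = Submodule.span F {P i, Q i}) (hdisj : Pairwise (Disjoint on L))
    {S : Finset (Fin m)} (hS : k ≤ 2 * S.card) {C : Finset (Finset (Pt F k))}
    (hC : ∀ D ∈ C, CrossingCircuit L D ∧ lineSet L D = S) :
    C.card ≤ (Fintype.card F + 1) ^ (2 * S.card - k - 1) := by
  set K := LinearMap.ker (Fintype.linearCombination F (pairFamily P Q S))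
  have hw : ∀ D : C, ∃ w ∈ K, w ≠ 0 ∧ coeffPoints P Q S w = D := by
    rintro ⟨D, hD⟩
    obtain ⟨hcirc, rfl⟩ := hC D hD
    obtain ⟨e, he⟩ := exists_equiv_lineSet hdisj hcirc.2.1 hcirc.2.2
    obtain ⟨g, hg, hg0⟩ := IsCircuit.exists_dependence hcirc.1
    refine exists_mem_ker_coeffPoints_eq (IsCircuit.nonempty hcirc.1) e (fun i => ?_) hg hg0
    rw [← hL, ← submodule_le_iff_rep_mem]
    exact he i
  choose w hwK hw0 hwD using hw
  let f : C → ℙ F K := fun D => Projectivization.mk F ⟨w D, hwK D⟩ (by simpa using hw0 D)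
  have hf : Injective f := by
    intro D D' hDD'
    obtain ⟨a, ha⟩ := (Projectivization.mk_eq_mk_iff' F _ _ _ _).mp hDD'
    have ha' : a • w D' = w D := congrArg Subtype.val ha
    have ha0 : a ≠ 0 := by
      rintro rfl
      exact hw0 D (by rw [← ha', zero_smul])
    apply Subtype.ext
    apply Finset.coe_injective
    rw [← hwD, ← hwD, ← ha', coeffPoints_smul P Q S _ ha0]
  calc C.card = Nat.card C := by simp
    _ ≤ Nat.card (ℙ F K) := Nat.card_le_card_of_injective f hf
    _ ≤ (Nat.card F + 1) ^ (Module.finrank F K - 1) := card_projectivization_le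
    _ = (Fintype.card F + 1) ^ (2 * S.card - k - 1) := by
      rw [finrank_ker_linearCombination _ (span_range_pairFamily_eq_top hgen hS)]
      simp [two_mul]

lemma card_crossingCircuits_le
    (hgen : ∀ T : Finset (Fin m ⊕ Fin m), T.card ≤ k →
      LinearIndependent F (fun t : {x // x ∈ T} => Sum.elim P Q (t : Fin m ⊕ Fin m)))
    (hL : ∀ i, L i = Submodule.span F {P i, Q i}) (hdisj : Pairwise (Disjoint on L))
    (ΩF : Finset (Pt F k)) {u : ℕ} (hu : k ≤ 2 * u) :
    (crossingCircuits L ΩF u).card ≤ m.choose u * (Fintype.card F + 1) ^ (2 * u - k - 1) := by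
  have hmaps : ∀ D ∈ crossingCircuits L ΩF u, lineSet L D ∈ Finset.univ.powersetCard u := by
    intro D hD
    obtain ⟨hDu, hcirc⟩ := Finset.mem_filter.mp hD
    rw [Finset.mem_powersetCard, card_lineSet hdisj hcirc]
    exact ⟨Finset.subset_univ _, (Finset.mem_powersetCard.mp hDu).2⟩
  rw [Finset.card_eq_sum_card_fiberwise hmaps]
  calc _ ≤ ∑ S ∈ Finset.univ.powersetCard u, (Fintype.card F + 1) ^ (2 * u - k - 1) := by
        refine Finset.sum_le_sum fun S hS => ?_
        rw [← (Finset.mem_powersetCard.mp hS).2] at hu ⊢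
        refine card_le_of_lineSet_eq hgen hL hdisj hu fun D hD => ?_
        obtain ⟨hD, hDS⟩ := Finset.mem_filter.mp hD
        exact ⟨(Finset.mem_filter.mp hD).2, hDS⟩
    _ = m.choose u * (Fintype.card F + 1) ^ (2 * u - k - 1) := by simp

end Counting

section ExpectedCount

variable {k m : ℕ}

lemma Xu_eq_sum {L : Fin m → Submodule F (Fin k → F)} {ΩF : Finset (Pt F k)}
    (hΩF : ∀ x, (∃ i, x.submodule ≤ L i) → x ∈ ΩF) (u : ℕ) (Γ : Finset (Pt F k)) :
    Xu L u Γ = ∑ D ∈ crossingCircuits L ΩF u,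
      ((D.powersetCard (2 * u - k)).filter (· ⊆ Γ)).card := by
  have hset : {DJ : Finset (Pt F k) × Finset (Pt F k) | CrossingCircuit L DJ.1 ∧ DJ.1.card = u ∧
      DJ.2 ⊆ DJ.1 ∩ Γ ∧ DJ.2.card = 2 * u - k} = ↑((crossingCircuits L ΩF u).biUnion
        fun D => ((D.powersetCard (2 * u - k)).filter (· ⊆ Γ)).image (Prod.mk D)) := by
    ext ⟨D, J⟩
    simp only [crossingCircuits, Set.mem_ofPred_eq, Finset.coe_biUnion, Finset.mem_coe,
      Finset.mem_filter, Finset.mem_powersetCard, Finset.mem_image, Set.mem_iUnion,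
      Finset.subset_inter_iff, Prod.mk.injEq]
    constructor
    · rintro ⟨hD, hDu, ⟨hJD, hJΓ⟩, hJt⟩
      exact ⟨D, ⟨⟨fun x hx => hΩF x (hD.2.1 x hx), hDu⟩, hD⟩, J, ⟨⟨hJD, hJt⟩, hJΓ⟩, rfl, rfl⟩
    · rintro ⟨D, ⟨⟨-, hDu⟩, hD⟩, J, ⟨⟨hJD, hJt⟩, hJΓ⟩, rfl, rfl⟩
      exact ⟨hD, hDu, ⟨hJD, hJΓ⟩, hJt⟩
  rw [Xu, hset, Set.ncard_coe_finset, Finset.card_biUnion]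
  · exact Finset.sum_congr rfl fun D _ =>
      Finset.card_image_of_injective _ (Prod.mk_right_injective D)
  · intro D _ D' _ hDD'
    simp only [Function.onFun, Finset.disjoint_left, Finset.mem_image]
    rintro _ ⟨J, -, rfl⟩ ⟨J', -, hJ'⟩
    exact hDD' (congrArg Prod.fst hJ').symm

lemma expec_Xu {L : Fin m → Submodule F (Fin k → F)} {ΩF : Finset (Pt F k)}
    (hΩF : ∀ x, (∃ i, x.submodule ≤ L i) → x ∈ ΩF) (p : ℝ) (u : ℕ) :
    expec p ΩF (fun Γ => (Xu L u Γ : ℝ)) =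
      (crossingCircuits L ΩF u).card * u.choose (2 * u - k) * p ^ (2 * u - k) := by
  simp_rw [Xu_eq_sum hΩF, Finset.card_filter, Nat.cast_sum, Nat.cast_ite, Nat.cast_one,
    Nat.cast_zero, expec_sum]
  calc _ = ∑ D ∈ crossingCircuits L ΩF u, ∑ _J ∈ D.powersetCard (2 * u - k), p ^ (2 * u - k) := by
        refine Finset.sum_congr rfl fun D hD => Finset.sum_congr rfl fun J hJ => ?_
        obtain ⟨hDΩ, -⟩ := Finset.mem_powersetCard.mp (Finset.mem_filter.mp hD).1
        obtain ⟨hJD, hJt⟩ := Finset.mem_powersetCard.mp hJ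
        rw [expec_indicator_subset p (hJD.trans hDΩ), hJt]
    _ = _ := by
        rw [Finset.sum_congr rfl fun D hD => by
          rw [Finset.sum_const, Finset.card_powersetCard,
            (Finset.mem_powersetCard.mp (Finset.mem_filter.mp hD).1).2]]
        simp [mul_assoc]

end ExpectedCount

section Estimates

lemma pow_mul_pow_eq_rpow {Qr c α p : ℝ} {s t : ℕ} (hQr : 0 < Qr) (hs : s ≠ 0)
    (hα : α = 1 - 1 / (s : ℝ)) (hp : p = c * Qr ^ (-α)) (ht : 1 ≤ t) :
    Qr ^ (t - 1) * p ^ t = c ^ t * Qr ^ ((t : ℝ) / s - 1) := by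
  have hexp : ((t - 1 : ℕ) : ℝ) + -α * t = (t : ℝ) / s - 1 := by
    rw [Nat.cast_sub ht, hα]
    field_simp
    ring
  rw [hp, mul_pow, ← Real.rpow_natCast (Qr ^ (-α)), ← Real.rpow_mul hQr.le, ← Real.rpow_natCast Qr,
    mul_left_comm, ← Real.rpow_add hQr, hexp]

lemma pow_mul_pow_le_rpow_neg_two_div {Qr c α p : ℝ} {s t : ℕ} (hQr : 1 ≤ Qr)
    (hα : α = 1 - 1 / (s : ℝ)) (hp : p = c * Qr ^ (-α)) (hc0 : 0 ≤ c) (hc1 : c ≤ 1)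
    (ht : 1 ≤ t) (hts : t + 2 ≤ s) :
    Qr ^ (t - 1) * p ^ t ≤ Qr ^ (-(2 : ℝ) / s) := by
  have hs : (0 : ℝ) < s := by exact_mod_cast (by omega : 0 < s)
  rw [pow_mul_pow_eq_rpow (by linarith) (by omega) hα hp ht]
  calc c ^ t * Qr ^ ((t : ℝ) / s - 1) ≤ 1 * Qr ^ ((t : ℝ) / s - 1) := by
        gcongr
        exact pow_le_one₀ hc0 hc1
    _ ≤ Qr ^ (-(2 : ℝ) / s) := by
        rw [one_mul, div_sub_one hs.ne']
        gcongr
        linarith [show (t : ℝ) + 2 ≤ s by exact_mod_cast hts]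

lemma sum_choose_mul_two_pow_le (m : ℕ) (I : Finset ℕ) (hI : I ⊆ Finset.range (m + 1)) :
    ∑ u ∈ I, (m.choose u : ℝ) * 2 ^ u ≤ 3 ^ m := by
  have h3 : ∑ u ∈ Finset.range (m + 1), (m.choose u : ℝ) * 2 ^ u = 3 ^ m := by
    rw [show (3 : ℝ) = 2 + 1 by norm_num, add_pow]
    simp [mul_comm]
  exact h3 ▸ Finset.sum_le_sum_of_subset_of_nonneg hI fun _ _ _ => by positivity

lemma sum_Icc_choose_mul_pow_le {m k s : ℕ} (hkm : k + 1 ≤ 2 * m) (hmk : m ≤ k) (hs : k + s = 2 * m)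
    {Qr ε c α p : ℝ} (hQr : 1 ≤ Qr) (hε0 : 0 < ε) (hε1 : ε < 1)
    (hc : c = (ε / (3 * (m.choose s : ℝ))) ^ ((1 : ℝ) / (s : ℝ)))
    (hα : α = 1 - 1 / (s : ℝ)) (hp : p = c * Qr ^ (-α)) :
    ∑ u ∈ Finset.Icc ((k + 2) / 2) m,
        (m.choose u : ℝ) * u.choose (2 * u - k) * Qr ^ (2 * u - k - 1) * p ^ (2 * u - k)
      ≤ ε / 3 + 3 ^ m * Qr ^ (-(2 : ℝ) / (s : ℝ)) := by
  have hs0 : s ≠ 0 := by omega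
  have hchoose : (1 : ℝ) ≤ m.choose s := by exact_mod_cast Nat.choose_pos (by omega : s ≤ m)
  have hx0 : 0 ≤ ε / (3 * (m.choose s : ℝ)) := by positivity
  have hx1 : ε / (3 * (m.choose s : ℝ)) ≤ 1 := by
    rw [div_le_one (by positivity)]
    nlinarith
  have hc0 : 0 ≤ c := hc ▸ Real.rpow_nonneg hx0 _
  have hc1 : c ≤ 1 := hc ▸ Real.rpow_le_one hx0 hx1 (by positivity)
  have hp0 : 0 ≤ p := hp ▸ mul_nonneg hc0 (Real.rpow_nonneg (by linarith) _)
  have hm : m ∈ Finset.Icc ((k + 2) / 2) m := Finset.mem_Icc.mpr ⟨by omega, le_rfl⟩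
  rw [← Finset.add_sum_erase _ _ hm]
  gcongr ?_ + ?_
  · -- the summand `u = m` is exactly `ε / 3`, by the choice of `c`
    have hts : 2 * m - k = s := by omega
    rw [mul_assoc, pow_mul_pow_eq_rpow (by linarith) hs0 hα hp (by omega), hts,
      div_self (by exact_mod_cast hs0), sub_self, Real.rpow_zero, mul_one, Nat.choose_self, hc,
      one_div, Real.rpow_inv_natCast_pow hx0 hs0]
    field_simp
    norm_num
  calc _ ≤ ∑ u ∈ (Finset.Icc ((k + 2) / 2) m).erase m,
          (m.choose u : ℝ) * 2 ^ u * Qr ^ (-(2 : ℝ) / s) := by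
        refine Finset.sum_le_sum fun u hu => ?_
        obtain ⟨hum, hu⟩ := Finset.mem_erase.mp hu
        obtain ⟨hku, hum'⟩ := Finset.mem_Icc.mp hu
        rw [mul_assoc]
        gcongr ?_ * ?_
        · gcongr
          exact_mod_cast Nat.choose_le_two_pow u _
        · exact pow_mul_pow_le_rpow_neg_two_div hQr hα hp hc0 hc1 (by omega) (by omega)
    _ = (∑ u ∈ (Finset.Icc ((k + 2) / 2) m).erase m, (m.choose u : ℝ) * 2 ^ u) *
          Qr ^ (-(2 : ℝ) / s) := (Finset.sum_mul _ _ _).symm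
    _ ≤ 3 ^ m * Qr ^ (-(2 : ℝ) / s) := by
        gcongr
        refine sum_choose_mul_two_pow_le m _ fun u hu => ?_
        simp only [Finset.mem_erase, Finset.mem_Icc, Finset.mem_range] at hu ⊢
        omega

end Estimates

theorem statement14_general [Fintype F] {m k s : ℕ} (hk4 : 4 ≤ k)
    (hkm : k + 1 ≤ 2 * m) (hmk : m ≤ k) (hs : k + s = 2 * m)
    (P Q : Fin m → (Fin k → F))
    (hgen : ∀ T : Finset (Fin m ⊕ Fin m), T.card ≤ k →
      LinearIndependent F (fun t : {x // x ∈ T} => Sum.elim P Q (t : Fin m ⊕ Fin m)))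
    (L : Fin m → Submodule F (Fin k → F))
    (hL : ∀ i, L i = Submodule.span F {P i, Q i})
    (ΩF : Finset (Pt F k)) (hΩF : ∀ x, x ∈ ΩF ↔ ∃ i, x.submodule ≤ L i)
    (Qr : ℝ) (hQr : Qr = (Fintype.card F : ℝ) + 1)
    (ε : ℝ) (hε0 : 0 < ε) (hε1 : ε < 1)
    (c : ℝ) (hc : c = (ε / (3 * (m.choose s : ℝ))) ^ ((1 : ℝ) / (s : ℝ)))
    (α : ℝ) (hα : α = 1 - 1 / (s : ℝ))
    (p : ℝ) (hp : p = c * Qr ^ (-α)) (hp0 : 0 < p) :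
    expec p ΩF (fun Γ => (Xtot L Γ : ℝ))
      ≤ ε / 3 + 3 ^ m * Qr ^ (-(2 : ℝ) / (s : ℝ)) := by
  have hdisj : Pairwise (Disjoint on L) := by
    simpa only [← hL] using pairwise_disjoint_span_pair hk4 hgen
  have hQr1 : 1 ≤ Qr := by
    rw [hQr]
    linarith [(Fintype.card F).cast_nonneg (α := ℝ)]
  calc expec p ΩF (fun Γ => (Xtot L Γ : ℝ))
      = ∑ u ∈ Finset.Icc ((k + 2) / 2) m,
          (crossingCircuits L ΩF u).card * u.choose (2 * u - k) * p ^ (2 * u - k) := by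
        simp only [Xtot, Nat.cast_sum, expec_sum, expec_Xu fun x => (hΩF x).mpr]
    _ ≤ ∑ u ∈ Finset.Icc ((k + 2) / 2) m,
          ((m.choose u * (Fintype.card F + 1) ^ (2 * u - k - 1) : ℕ) : ℝ) *
            u.choose (2 * u - k) * p ^ (2 * u - k) := by
        gcongr with u hu
        exact card_crossingCircuits_le hgen hL hdisj ΩF (by grind)
    _ = ∑ u ∈ Finset.Icc ((k + 2) / 2) m,
          (m.choose u : ℝ) * u.choose (2 * u - k) * Qr ^ (2 * u - k - 1) * p ^ (2 * u - k) := by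
        refine Finset.sum_congr rfl fun u _ => ?_
        rw [hQr]
        push_cast
        ring
    _ ≤ ε / 3 + 3 ^ m * Qr ^ (-(2 : ℝ) / (s : ℝ)) :=
        sum_Icc_choose_mul_pow_le hkm hmk hs hQr1 hε0 hε1 hc hα hp

/-- with `c = (ε/(3·binom(m,s)))^{1/s}`, `α = 1 - 1/s` and `p = c·Q^{-α}`,
one has `E[X] ≤ ε/3 + 3^m·Q^{-2/s}`. -/
theorem statement14 [Fintype F] {m k s : ℕ} (hm : 2 ≤ m) (hk4 : 4 ≤ k)
    (hkm : k + 1 ≤ 2 * m) (hmk : m ≤ k) (hs : k + s = 2 * m)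
    (P Q : Fin m → (Fin k → F))
    (hgen : ∀ T : Finset (Fin m ⊕ Fin m), T.card ≤ k →
      LinearIndependent F (fun t : {x // x ∈ T} => Sum.elim P Q (t : Fin m ⊕ Fin m)))
    (L : Fin m → Submodule F (Fin k → F))
    (hL : ∀ i, L i = Submodule.span F {P i, Q i})
    (ΩF : Finset (Pt F k)) (hΩF : ∀ x, x ∈ ΩF ↔ ∃ i, x.submodule ≤ L i)
    (Qr : ℝ) (hQr : Qr = (Fintype.card F : ℝ) + 1)
    (ε : ℝ) (hε0 : 0 < ε) (hε1 : ε < 1)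
    (c : ℝ) (hc : c = (ε / (3 * (m.choose s : ℝ))) ^ ((1 : ℝ) / (s : ℝ)))
    (α : ℝ) (hα : α = 1 - 1 / (s : ℝ))
    (p : ℝ) (hp : p = c * Qr ^ (-α)) (hp0 : 0 < p) (hp1 : p < 1) :
    expec p ΩF (fun Γ => (Xtot L Γ : ℝ))
      ≤ ε / 3 + 3 ^ m * Qr ^ (-(2 : ℝ) / (s : ℝ)) :=
  statement14_general hk4 hkm hmk hs P Q hgen L hL ΩF hΩF Qr hQr ε hε0 hε1 c hc α hα p hp hp0
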